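/- arXiv:2211.15014 — 6 statements merged into one kernel-verified Lean document; each statement's English description precedes it below -/
import Mathlib

section
/- Let Q₁, Q₂ be quandles with Q₁ faithful, and let f : Q₁ → Q₂ be an injective quandle homomorphism. Then there is a well-defined surjective group homomorphism π : Inn(Q₂, f(Q₁)) → Inn(Q₁) with π(s_{f(x)}) = s_x for all x ∈ Q₁, and the restriction of π to the set {s_{f(x)} : x ∈ Q₁} is a bijection onto {s_x : x ∈ Q₁}. -/
/-!
Since `f` is a homomorphism, `s_{f x} ∘ f = f ∘ s_x`, so every element of `Inn(Q₂, f(Q₁))`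
preserves `f(Q₁)` and, `f` being injective, restricts to a unique permutation of `Q₁`.
Restriction is a group homomorphism sending the generators `s_{f x}` to the generators `s_x`
of `Inn(Q₁)`, hence onto `Inn(Q₁)`; on symmetries it is injective because `Q₁` is faithful.
-/

/-- A quandle structure on a type `Q`. -/
structure QuandleStr (Q : Type*) where
  s : Q → Q → Q
  fix : ∀ x, s x x = x
  bij : ∀ x, Function.Bijective (s x)
  dist : ∀ x y z, s x (s y z) = s (s x y) (s x z)

/-- The symmetry at a point, as a permutation of `Q`. -/
noncomputable def QuandleStr.sym {Q : Type*} (q : QuandleStr Q) (x : Q) : Equiv.Perm Q :=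
  Equiv.ofBijective (q.s x) (q.bij x)

/-- The inner automorphism group of a quandle. -/
noncomputable def QuandleStr.inn {Q : Type*} (q : QuandleStr Q) : Subgroup (Equiv.Perm Q) :=
  Subgroup.closure (Set.range q.sym)

/-- The subgroup Inn(Q, Q') generated by the symmetries at points of a subset Q'. -/
noncomputable def QuandleStr.innRel {Q : Type*} (q : QuandleStr Q) (Q' : Set Q) :
    Subgroup (Equiv.Perm Q) :=
  Subgroup.closure (q.sym '' Q')

theorem QuandleStr.sym_mem_innRel {Q : Type*} (q : QuandleStr Q) {Q' : Set Q} {x : Q}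
    (hx : x ∈ Q') : q.sym x ∈ q.innRel Q' :=
  Subgroup.subset_closure ⟨x, hx, rfl⟩

open Function Set

namespace Equiv.Perm

variable {α β : Type*}

def liftableAlong (f : α → β) : Subgroup (Perm β) where
  carrier := {g | ∃ h : Perm α, ∀ x, g (f x) = f (h x)}
  one_mem' := ⟨1, fun _ => rfl⟩
  mul_mem' := by
    rintro g₁ g₂ ⟨h₁, hg₁⟩ ⟨h₂, hg₂⟩
    exact ⟨h₁ * h₂, fun x => by simp only [mul_apply, hg₂, hg₁]⟩
  inv_mem' := by
    rintro g ⟨h, hg⟩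
    refine ⟨h⁻¹, fun x => ?_⟩
    rw [inv_eq_iff_eq, hg, ← mul_apply, mul_inv_cancel, one_apply]

variable {f : α → β}

theorem eq_of_comp_eq_comp (hf : Injective f) {g : Perm β} {h h' : Perm α}
    (H : ∀ x, g (f x) = f (h x)) (H' : ∀ x, g (f x) = f (h' x)) : h = h' :=
  Equiv.ext fun x => hf <| (H x).symm.trans (H' x)

noncomputable def restrictAlong (hf : Injective f) : liftableAlong f →* Perm α where
  toFun g := g.2.choose
  map_one' := eq_of_comp_eq_comp hf (1 : liftableAlong f).2.choose_spec fun _ => rfl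
  map_mul' g₁ g₂ := eq_of_comp_eq_comp hf (g₁ * g₂).2.choose_spec fun x => by
    rw [Subgroup.coe_mul, mul_apply, g₂.2.choose_spec, g₁.2.choose_spec, mul_apply]

theorem apply_restrictAlong (hf : Injective f) (g : liftableAlong f) (x : α) :
    (g : Perm β) (f x) = f (restrictAlong hf g x) :=
  g.2.choose_spec x

theorem restrictAlong_eq_of_forall (hf : Injective f) {g : liftableAlong f} {h : Perm α}
    (H : ∀ x, (g : Perm β) (f x) = f (h x)) : restrictAlong hf g = h :=
  eq_of_comp_eq_comp hf (apply_restrictAlong hf g) H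

end Equiv.Perm

namespace QuandleStr

open Equiv.Perm

theorem sym_injective {Q : Type*} (q : QuandleStr Q) (hq : ∀ x y, q.s x = q.s y → x = y) :
    Injective q.sym :=
  fun x y h => hq x y (congrArg DFunLike.coe h)

variable {Q₁ Q₂ : Type*} {q₁ : QuandleStr Q₁} {q₂ : QuandleStr Q₂} {f : Q₁ → Q₂}

theorem innRel_range_le_liftableAlong (hhom : ∀ x y, f (q₁.s x y) = q₂.s (f x) (f y)) :
    q₂.innRel (range f) ≤ liftableAlong f :=
  Subgroup.closure_le _ |>.2 <| by
    rintro _ ⟨_, ⟨x, rfl⟩, rfl⟩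
    exact ⟨q₁.sym x, fun y => (hhom x y).symm⟩

noncomputable def innRestrict (hf : Injective f)
    (hhom : ∀ x y, f (q₁.s x y) = q₂.s (f x) (f y)) :
    q₂.innRel (range f) →* Equiv.Perm Q₁ :=
  (restrictAlong hf).comp (Subgroup.inclusion (innRel_range_le_liftableAlong hhom))

theorem innRestrict_sym (hf : Injective f)
    (hhom : ∀ x y, f (q₁.s x y) = q₂.s (f x) (f y)) (x : Q₁) :
    innRestrict hf hhom ⟨q₂.sym (f x), q₂.sym_mem_innRel (mem_range_self x)⟩ = q₁.sym x :=
  restrictAlong_eq_of_forall hf fun y => (hhom x y).symm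

theorem range_innRestrict (hf : Injective f)
    (hhom : ∀ x y, f (q₁.s x y) = q₂.s (f x) (f y)) :
    (innRestrict hf hhom).range = q₁.inn := by
  refine le_antisymm ?_ <| Subgroup.closure_le _ |>.2 ?_
  · have htop : (⊤ : Subgroup (q₂.innRel (range f))) =
        Subgroup.closure (Subtype.val ⁻¹' (q₂.sym '' range f)) :=
      Subgroup.closure_closure_coe_preimage.symm
    rw [MonoidHom.range_eq_map, htop, MonoidHom.map_closure, Subgroup.closure_le]
    rintro _ ⟨⟨_, _⟩, ⟨_, ⟨x, rfl⟩, rfl⟩, rfl⟩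
    rw [SetLike.mem_coe, innRestrict_sym hf hhom x]
    exact Subgroup.subset_closure (mem_range_self x)
  · rintro _ ⟨x, rfl⟩
    exact ⟨_, innRestrict_sym hf hhom x⟩

theorem bijOn_innRestrict (hf : Injective f)
    (hhom : ∀ x y, f (q₁.s x y) = q₂.s (f x) (f y))
    (hq₁ : ∀ x y : Q₁, q₁.s x = q₁.s y → x = y) :
    BijOn (innRestrict hf hhom) {g | (g : Equiv.Perm Q₂) ∈ q₂.sym '' range f}
      (range q₁.sym) := by
  refine ⟨?_, ?_, ?_⟩
  · rintro ⟨_, _⟩ ⟨_, ⟨x, rfl⟩, rfl⟩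
    exact ⟨x, (innRestrict_sym hf hhom x).symm⟩
  · rintro ⟨_, _⟩ ⟨_, ⟨x₁, rfl⟩, rfl⟩ ⟨_, _⟩ ⟨_, ⟨x₂, rfl⟩, rfl⟩ h
    rw [innRestrict_sym, innRestrict_sym] at h
    obtain rfl := q₁.sym_injective hq₁ h
    rfl
  · rintro _ ⟨x, rfl⟩
    exact ⟨_, ⟨f x, mem_range_self x, rfl⟩, innRestrict_sym hf hhom x⟩

end QuandleStr

/-- Given `Q₁` faithful and an injective quandle homomorphism `f : Q₁ → Q₂`, there is a
well-defined surjective group homomorphism `π : Inn(Q₂, f(Q₁)) → Inn(Q₁)` with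
`π(s_{f x}) = s_x`, restricting to a bijection between the sets of symmetries. -/
theorem inn_functor_inj {Q₁ Q₂ : Type*} (q₁ : QuandleStr Q₁) (q₂ : QuandleStr Q₂)
    (hfaithful : ∀ x y : Q₁, q₁.s x = q₁.s y → x = y)
    (f : Q₁ → Q₂) (hf : Function.Injective f)
    (hhom : ∀ x y : Q₁, f (q₁.s x y) = q₂.s (f x) (f y)) :
    ∃ π : q₂.innRel (Set.range f) →* q₁.inn,
      (∀ x : Q₁,
        (π ⟨q₂.sym (f x), q₂.sym_mem_innRel (Set.mem_range_self x)⟩ : Equiv.Perm Q₁)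
          = q₁.sym x) ∧
      Function.Surjective π ∧
      Set.BijOn (fun g : q₂.innRel (Set.range f) => ((π g : q₁.inn) : Equiv.Perm Q₁))
        {g : q₂.innRel (Set.range f) | (g : Equiv.Perm Q₂) ∈ q₂.sym '' Set.range f}
        (Set.range q₁.sym) := by
  let e := MulEquiv.subgroupCongr (QuandleStr.range_innRestrict hf hhom)
  exact ⟨e.toMonoidHom.comp (QuandleStr.innRestrict hf hhom).rangeRestrict,
    QuandleStr.innRestrict_sym hf hhom, e.surjective.comp (MonoidHom.rangeRestrict_surjective _),
    QuandleStr.bijOn_innRestrict hf hhom hfaithful⟩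
end

section
/- Let G be a group with trivial center, generated by a conjugation-stable subset Ω (g Ω g⁻¹ ⊆ Ω for all g ∈ G). Then the map φ : G → Inn(Conj(Ω)) sending g to the quandle automorphism ω ↦ g ω g⁻¹ of the conjugation quandle on Ω is a group isomorphism, and φ(Ω) = {s_ω : ω ∈ Ω}. -/
/-- For a group G with trivial center generated by a conjugation-stable subset Ω,
the conjugation map `φ : G → Inn(Conj(Ω))`, `g ↦ (ω ↦ g ω g⁻¹)`, is a group
isomorphism onto `Inn(Conj(Ω))` and sends Ω onto the set of symmetries. -/
theorem conj_iso_inn {G : Type*} [Group G] (Ω : Set G)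
    (hgen : Subgroup.closure Ω = ⊤)
    (hconj : ∀ g : G, ∀ ω ∈ Ω, g * ω * g⁻¹ ∈ Ω)
    (hcenter : ∀ g : G, (∀ h : G, g * h = h * g) → g = 1) :
    ∃ φ : G →* Equiv.Perm Ω,
      (∀ (g : G) (ω : Ω), ((φ g ω : Ω) : G) = g * (ω : G) * g⁻¹) ∧
      Function.Injective φ ∧
      φ.range =
        Subgroup.closure
          {p : Equiv.Perm Ω | ∃ ω ∈ Ω, ∀ x : Ω, ((p x : Ω) : G) = ω * (x : G) * ω⁻¹} ∧
      (φ '' Ω) =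
        {p : Equiv.Perm Ω | ∃ ω ∈ Ω, ∀ x : Ω, ((p x : Ω) : G) = ω * (x : G) * ω⁻¹} := by
  set e : G → Equiv.Perm Ω := fun g =>
    { toFun := fun x => ⟨g * x * g⁻¹, hconj g x x.2⟩
      invFun := fun x => ⟨g⁻¹ * x * g, by simpa using hconj g⁻¹ x x.2⟩
      left_inv := fun x => by ext; simp [mul_assoc]
      right_inv := fun x => by ext; simp [mul_assoc] } with he
  have hmul : ∀ a b : G, e (a * b) = e a * e b := by
    intro a b
    ext x
    simp [he, mul_assoc]
  set φ : G →* Equiv.Perm Ω := MonoidHom.mk' e hmul with hφ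
  have hspec : ∀ (g : G) (ω : Ω), ((φ g ω : Ω) : G) = g * (ω : G) * g⁻¹ := by
    intro g ω; rfl
  have hinj : Function.Injective φ := by
    rw [injective_iff_map_eq_one]
    intro g hg
    apply hcenter
    have hΩ : ∀ ω ∈ Ω, g * ω = ω * g := by
      intro ω hω
      have h2 : g * ω * g⁻¹ = ω := by
        have := congrArg (fun p : Equiv.Perm Ω => ((p ⟨ω, hω⟩ : Ω) : G)) hg
        simpa [hspec] using this
      calc g * ω = (g * ω * g⁻¹) * g := by group
        _ = ω * g := by rw [h2]
    intro h
    have hh : h ∈ Subgroup.closure Ω := by rw [hgen]; trivial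
    induction hh using Subgroup.closure_induction with
    | mem x hx => exact hΩ x hx
    | one => simp
    | mul x y _ _ hx hy => rw [← mul_assoc, hx, mul_assoc, hy, ← mul_assoc]
    | inv x _ hx =>
        have : x * (g * x⁻¹) = (g * x⁻¹) * x := by
          rw [← mul_assoc, ← hx]; group
        calc g * x⁻¹ = x⁻¹ * (x * (g * x⁻¹)) := by group
          _ = x⁻¹ * ((g * x⁻¹) * x) := by rw [this]
          _ = x⁻¹ * g := by group
  have himg : (φ '' Ω) =
      {p : Equiv.Perm Ω | ∃ ω ∈ Ω, ∀ x : Ω, ((p x : Ω) : G) = ω * (x : G) * ω⁻¹} := by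
    ext p
    constructor
    · rintro ⟨ω, hω, rfl⟩
      exact ⟨ω, hω, fun x => hspec ω x⟩
    · rintro ⟨ω, hω, hp⟩
      refine ⟨ω, hω, ?_⟩
      ext x
      exact ((hp x).trans (hspec ω x).symm).symm
  refine ⟨φ, hspec, hinj, ?_, himg⟩
  rw [← himg, ← MonoidHom.map_closure, hgen]
  ext p
  simp [MonoidHom.mem_range, Subgroup.mem_map]
end

section
/- Let π₃ : H₃ → G₂ be a surjective group homomorphism, Γ₃ ⊆ H₃ a conjugation-stable generating set of H₃ with π₃|_{Γ₃} : Γ₃ → Ω₂ a bijection onto a conjugation-stable generating set Ω₂ of G₂, and let H₂ ≤ G₂ be a subgroup with conjugation-stable (in H₂) generating set Γ₂ ⊆ Ω₂. Set Γ := (π₃|_{Γ₃})⁻¹(Γ₂) ⊆ Γ₃. Then Γ is conjugation-stable in the subgroup ⟨Γ⟩ of H₃, and π₃ restricts to a bijection Γ → Γ₂. -/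
/-- Key lemma for composition in the category Grp^{g.c.f.}_⋆ : pulling back a
conjugation-stable generating set Γ₂ of a subgroup H₂ ≤ G₂ along the bijection
π₃|_{Γ₃} : Γ₃ → Ω₂ gives a set Γ which is conjugation-stable in ⟨Γ⟩, and π₃
restricts to a bijection Γ → Γ₂. -/
theorem composition_well_defined {H₃ G₂ : Type*} [Group H₃] [Group G₂]
    (π₃ : H₃ →* G₂) (hπ₃ : Function.Surjective π₃)
    (Γ₃ : Set H₃) (Ω₂ : Set G₂)
    (hgen₃ : Subgroup.closure Γ₃ = ⊤)
    (hconj₃ : ∀ h : H₃, ∀ γ ∈ Γ₃, h * γ * h⁻¹ ∈ Γ₃)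
    (hgen₂ : Subgroup.closure Ω₂ = ⊤)
    (hconj₂ : ∀ g : G₂, ∀ ω ∈ Ω₂, g * ω * g⁻¹ ∈ Ω₂)
    (hbij : Set.BijOn π₃ Γ₃ Ω₂)
    (H₂ : Subgroup G₂) (Γ₂ : Set G₂) (hΓ₂Ω₂ : Γ₂ ⊆ Ω₂)
    (hgenH₂ : Subgroup.closure Γ₂ = H₂)
    (hconjH₂ : ∀ h ∈ H₂, ∀ γ ∈ Γ₂, h * γ * h⁻¹ ∈ Γ₂) :
    (∀ h ∈ Subgroup.closure {x ∈ Γ₃ | π₃ x ∈ Γ₂},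
        ∀ γ ∈ {x ∈ Γ₃ | π₃ x ∈ Γ₂}, h * γ * h⁻¹ ∈ {x ∈ Γ₃ | π₃ x ∈ Γ₂}) ∧
    Set.BijOn π₃ {x ∈ Γ₃ | π₃ x ∈ Γ₂} Γ₂ := by
  set Γ : Set H₃ := {x ∈ Γ₃ | π₃ x ∈ Γ₂} with hΓ
  have hmaps : ∀ h ∈ Subgroup.closure Γ, π₃ h ∈ H₂ := by
    intro h hh
    induction hh using Subgroup.closure_induction with
    | mem x hx => exact hgenH₂ ▸ Subgroup.subset_closure hx.2
    | one => simpa using Subgroup.one_mem H₂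
    | mul x y _ _ hx hy => rw [map_mul]; exact H₂.mul_mem hx hy
    | inv x _ hx => rw [map_inv]; exact H₂.inv_mem hx
  refine ⟨fun h hh γ hγ => ⟨hconj₃ h γ hγ.1, ?_⟩, ?_⟩
  · have := hconjH₂ (π₃ h) (hmaps h hh) (π₃ γ) hγ.2
    simpa [map_mul, map_inv] using this
  · refine ⟨fun x hx => hx.2, hbij.injOn.mono (fun x hx => hx.1), ?_⟩
    intro y hy
    obtain ⟨x, hx, rfl⟩ := hbij.surjOn (hΓ₂Ω₂ hy)
    exact ⟨x, ⟨hx, hy⟩, rfl⟩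
end

section
/- Let Q₁ and Q₂ be finite faithful quandles. If there exists an injective quandle homomorphism f : Q₁ → Q₂, then the order of Inn(Q₁) divides the order of Inn(Q₂). -/
/-!
The symmetries at the points of `f(Q₁)` generate a subgroup `H = Inn(Q₂, f(Q₁))` of `Inn(Q₂)`.
Since `f ∘ s_x = s_{f x} ∘ f`, each generator maps `f(Q₁)` onto itself, so restricting to
`f(Q₁) ≃ Q₁` is a homomorphism `H → Perm Q₁` sending `s_{f x}` to `s_x`. Its image contains
`Inn(Q₁)`, whence `|Inn(Q₁)| ∣ |image| ∣ |H| ∣ |Inn(Q₂)|`.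
-/

open Equiv MulAction Pointwise Set

noncomputable def Function.Injective.restrictRange {α β : Type*} {f : α → β}
    (hf : Function.Injective f) : stabilizer (Perm β) (range f) →* Perm α :=
  (Equiv.ofInjective f hf).symm.permCongrHom.toMonoidHom.comp (toPermHom _ _)

lemma Function.Injective.apply_restrictRange {α β : Type*} {f : α → β}
    (hf : Function.Injective f) (g : stabilizer (Perm β) (range f)) (a : α) :
    f (hf.restrictRange g a) = (g : Perm β) (f a) := by
  simp [Function.Injective.restrictRange, apply_ofInjective_symm]

namespace QuandleStr

variable {Q Q₁ Q₂ : Type*}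

def IsHom (q₁ : QuandleStr Q₁) (q₂ : QuandleStr Q₂) (f : Q₁ → Q₂) : Prop :=
  ∀ x y, f (q₁.s x y) = q₂.s (f x) (f y)

/-- The paper's `Inn(Q, S)`. -/
def innOn (q : QuandleStr Q) (S : Set Q) : Subgroup (Perm Q) :=
  Subgroup.closure (q.sym '' S)

lemma innOn_le_inn (q : QuandleStr Q) (S : Set Q) : q.innOn S ≤ q.inn :=
  Subgroup.closure_mono (image_subset_range _ _)

lemma innOn_le_stabilizer (q : QuandleStr Q) {S : Set Q} (hS : ∀ x ∈ S, q.sym x • S = S) :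
    q.innOn S ≤ stabilizer (Perm Q) S :=
  (Subgroup.closure_le _).2 <| by
    rintro _ ⟨x, hx, rfl⟩
    exact hS x hx

namespace IsHom

variable {q₁ : QuandleStr Q₁} {q₂ : QuandleStr Q₂} {f : Q₁ → Q₂}

lemma sym_comp (hf : IsHom q₁ q₂ f) (x : Q₁) : q₂.sym (f x) ∘ f = f ∘ q₁.sym x :=
  funext fun y => (hf x y).symm

lemma sym_smul_range (hf : IsHom q₁ q₂ f) (x : Q₁) : q₂.sym (f x) • range f = range f := by
  rw [← image_smul, ← range_comp]
  change range (q₂.sym (f x) ∘ f) = range f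
  rw [hf.sym_comp, (q₁.sym x).surjective.range_comp]

lemma restrictRange_sym (hf : IsHom q₁ q₂ f) (hinj : Function.Injective f) (x : Q₁)
    (hx : q₂.sym (f x) ∈ stabilizer (Perm Q₂) (range f)) :
    hinj.restrictRange ⟨q₂.sym (f x), hx⟩ = q₁.sym x := by
  ext y
  apply hinj
  rw [hinj.apply_restrictRange]
  exact (hf x y).symm

end IsHom

end QuandleStr

theorem inn_card_dvd_general {Q₁ Q₂ : Type*}
    (q₁ : QuandleStr Q₁) (q₂ : QuandleStr Q₂)
    (f : Q₁ → Q₂) (hf : Function.Injective f)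
    (hhom : ∀ x y : Q₁, f (q₁.s x y) = q₂.s (f x) (f y)) :
    Nat.card q₁.inn ∣ Nat.card q₂.inn := by
  have hhom : q₁.IsHom q₂ f := hhom
  have hstab : q₂.innOn (range f) ≤ stabilizer (Perm Q₂) (range f) :=
    q₂.innOn_le_stabilizer <| by
      rintro _ ⟨x, rfl⟩
      exact hhom.sym_smul_range x
  let ρ := hf.restrictRange.comp (Subgroup.inclusion hstab)
  have hsurj : q₁.inn ≤ ρ.range := (Subgroup.closure_le _).2 <| by
    rintro _ ⟨x, rfl⟩
    exact ⟨⟨q₂.sym (f x), Subgroup.subset_closure (mem_image_of_mem _ (mem_range_self x))⟩,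
      hhom.restrictRange_sym hf x _⟩
  calc Nat.card q₁.inn ∣ Nat.card ρ.range := Subgroup.card_dvd_of_le hsurj
    _ ∣ Nat.card (q₂.innOn (range f)) := Subgroup.card_range_dvd ρ
    _ ∣ Nat.card q₂.inn := Subgroup.card_dvd_of_le (q₂.innOn_le_inn _)

/-- If there is an injective quandle homomorphism between finite faithful quandles
Q₁ and Q₂, then #Inn(Q₁) divides #Inn(Q₂). -/
theorem inn_card_dvd {Q₁ Q₂ : Type*} [Finite Q₁] [Finite Q₂]
    (q₁ : QuandleStr Q₁) (q₂ : QuandleStr Q₂)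
    (hfaith₁ : ∀ x y : Q₁, q₁.s x = q₁.s y → x = y)
    (hfaith₂ : ∀ x y : Q₂, q₂.s x = q₂.s y → x = y)
    (f : Q₁ → Q₂) (hf : Function.Injective f)
    (hhom : ∀ x y : Q₁, f (q₁.s x y) = q₂.s (f x) (f y)) :
    Nat.card q₁.inn ∣ Nat.card q₂.inn :=
  inn_card_dvd_general q₁ q₂ f hf hhom
end

section
/- Let m and n be odd positive integers. If there exists an injective quandle homomorphism from the dihedral quandle R_m to the dihedral quandle R_n, then m divides n. -/
/-- For odd m, n, if there is an injective quandle homomorphism R_m → R_n between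
dihedral quandles, then m divides n. -/
theorem dihedral_inj_hom_dvd (m n : ℕ) (hm : Odd m) (hn : Odd n)
    (hmpos : 0 < m) (hnpos : 0 < n)
    (f : ZMod m → ZMod n) (hf : Function.Injective f)
    (hhom : ∀ a b : ZMod m, f (2 * a - b) = 2 * f a - f b) :
    m ∣ n := by
  set d : ZMod n := f 1 - f 0 with hd
  have key : ∀ k : ℕ, f ((k : ZMod m)) = f 0 + (k : ZMod n) * d := by
    intro k
    induction k using Nat.twoStepInduction with
    | zero => simp
    | one => push_cast; ring
    | more k ih2 ih1 =>
      have hcast : ((k + 2 : ℕ) : ZMod m) = 2 * ((k + 1 : ℕ) : ZMod m) - (k : ZMod m) := by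
        push_cast; ring
      rw [hcast, hhom, ih1, ih2]
      push_cast; ring
  have h0 : f ((n : ZMod m)) = f 0 := by
    rw [key n, ZMod.natCast_self]
    ring
  have := hf h0
  exact (ZMod.natCast_eq_zero_iff n m).mp this
end

section
/- Every injective quandle homomorphism from the dihedral quandle R₃ to the dihedral quandle R₉ is of the form [k]₃ ↦ c + ε·[3k]₉ for some c ∈ Z/9Z and ε ∈ {1, −1}; in particular there are exactly 18 injective quandle homomorphisms R₃ → R₉. -/
set_option maxRecDepth 10000

/-- Every injective quandle homomorphism R₃ → R₉ has the form [k]₃ ↦ c + ε·[3k]₉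
with c ∈ Z/9 and ε ∈ {1, −1}; in particular there are exactly 18 of them. -/
theorem dihedral_R3_R9_classification :
    (∀ f : ZMod 3 → ZMod 9, Function.Injective f →
      (∀ a b : ZMod 3, f (2 * a - b) = 2 * f a - f b) →
      ∃ (c ε : ZMod 9), (ε = 1 ∨ ε = -1) ∧
        ∀ k : ZMod 3, f k = c + ε * (3 * (k.val : ZMod 9))) ∧
    Nat.card {f : ZMod 3 → ZMod 9 //
      Function.Injective f ∧ ∀ a b : ZMod 3, f (2 * a - b) = 2 * f a - f b} = 18 := by
  constructor
  · decide
  · rw [Nat.card_eq_fintype_card]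
    decide
end
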